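/- arXiv:1404.5225 — 4 statements merged into one kernel-verified Lean document; each statement's English description precedes it below -/
import Mathlib

section
/- Let A be an associative algebra over a field of characteristic ≠ 2 which is a module algebra over the Sweedler 4-dimensional Hopf algebra H (generators g, x as above). Then the bilinear map Ψ : A ⊗ A → A, Ψ(a ⊗ b) = (xg)(a) · x(b), is a Hochschild 2-cocycle of A: for all a, b, c ∈ A, a Ψ(b,c) − Ψ(ab,c) + Ψ(a,bc) − Ψ(a,b) c = 0. -/
open TensorProduct

variable {k H A : Type*} [Field k] [Ring H] [Bialgebra k H] [Ring A] [Algebra k A]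

/-- `ρ̂(x ⊗ y)(a ⊗ b) = ρ(x)(a) ρ(y)(b)` (uncurried). -/
noncomputable def evHat (ρ : H →ₐ[k] Module.End k A) (t : H ⊗[k] H) (a b : A) : A :=
  LinearMap.mul' k A
    (TensorProduct.map ((LinearMap.applyₗ a).comp ρ.toLinearMap)
      ((LinearMap.applyₗ b).comp ρ.toLinearMap) t)

/-! The twisted Leibniz rules `x(ab) = x(a) b + g(a) x(b)` and, for `D = xg`,
`D(ab) = D(a) g(b) + a D(b)` (using `g² = 1`) make the two boundary terms of `∂Ψ` cancel the
two middle ones in pairs. -/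

def IsHochschildTwoCocycle (f : A → A → A) : Prop :=
  ∀ a b c : A, a * f b c - f (a * b) c + f a (b * c) - f a b * c = 0

theorem isHochschildTwoCocycle_mul_of_leibniz {D δ σ : A → A}
    (hD : ∀ a b, D (a * b) = D a * σ b + a * D b)
    (hδ : ∀ a b, δ (a * b) = δ a * b + σ a * δ b) :
    IsHochschildTwoCocycle fun a b => D a * δ b := by
  intro a b c
  simp only [hD, hδ, add_mul, mul_add, mul_assoc]
  abel

theorem leibniz_comp_of_involutive {δ σ : A → A}
    (hδ : ∀ a b, δ (a * b) = δ a * b + σ a * δ b) (hσ : ∀ a b, σ (a * b) = σ a * σ b)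
    (hσσ : ∀ a, σ (σ a) = a) (a b : A) :
    δ (σ (a * b)) = δ (σ a) * σ b + a * δ (σ b) := by
  rw [hσ, hδ, hσσ]

section ModuleAlgebra

@[simp]
theorem evHat_tmul (ρ : H →ₐ[k] Module.End k A) (h₁ h₂ : H) (a b : A) :
    evHat ρ (h₁ ⊗ₜ[k] h₂) a b = ρ h₁ a * ρ h₂ b := rfl

variable {ρ : H →ₐ[k] Module.End k A}
  (hma : ∀ (h : H) (a b : A), ρ h (a * b) = evHat ρ (Coalgebra.comul (R := k) h) a b)
include hma

theorem map_mul_of_comul_eq_tmul {g : H} (hΔg : Coalgebra.comul (R := k) g = g ⊗ₜ[k] g)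
    (a b : A) : ρ g (a * b) = ρ g a * ρ g b := by
  rw [hma, hΔg, evHat_tmul]

theorem map_mul_of_comul_eq_skewPrimitive {g x : H}
    (hΔx : Coalgebra.comul (R := k) x = x ⊗ₜ[k] 1 + g ⊗ₜ[k] x) (a b : A) :
    ρ x (a * b) = ρ x a * b + ρ g a * ρ x b := by
  rw [hma, hΔx, evHat, map_add, map_add]
  simp

end ModuleAlgebra

theorem stmt8_general (g x : H)
    (hg2 : g * g = 1)
    (hΔg : Coalgebra.comul (R := k) g = g ⊗ₜ[k] g)
    (hΔx : Coalgebra.comul (R := k) x = x ⊗ₜ[k] 1 + g ⊗ₜ[k] x)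
    (ρ : H →ₐ[k] Module.End k A)
    (hma : ∀ (h : H) (a b : A), ρ h (a * b) = evHat ρ (Coalgebra.comul (R := k) h) a b)
    (Ψ : A → A → A) (hΨ : ∀ a b, Ψ a b = ρ (x * g) a * ρ x b) :
    ∀ a b c : A, a * Ψ b c - Ψ (a * b) c + Ψ a (b * c) - Ψ a b * c = 0 := by
  have hδ := map_mul_of_comul_eq_skewPrimitive hma hΔx
  have hσ := map_mul_of_comul_eq_tmul hma hΔg
  have hσσ (a : A) : ρ g (ρ g a) = a := by
    rw [← Module.End.mul_apply, ← map_mul, hg2, map_one, Module.End.one_apply]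
  have hΨ' : Ψ = fun a b => ρ x (ρ g a) * ρ x b := by
    ext a b; rw [hΨ, map_mul, Module.End.mul_apply]
  rw [hΨ']
  exact isHochschildTwoCocycle_mul_of_leibniz (leibniz_comp_of_involutive hδ hσ hσσ) hδ

/-- if `A` is a module algebra over the Sweedler 4-dimensional Hopf algebra
`H` (char `k ≠ 2`), then `Ψ(a,b) = (xg)(a)·x(b)` is a Hochschild 2-cocycle:
`a Ψ(b,c) − Ψ(ab,c) + Ψ(a,bc) − Ψ(a,b)c = 0`. -/
theorem stmt8 (hchar : (2 : k) ≠ 0) (g x : H)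
    (hx2 : x * x = 0) (hg2 : g * g = 1) (hxg : x * g = -(g * x))
    (hΔg : Coalgebra.comul (R := k) g = g ⊗ₜ[k] g)
    (hΔx : Coalgebra.comul (R := k) x = x ⊗ₜ[k] 1 + g ⊗ₜ[k] x)
    (hεg : Coalgebra.counit (R := k) g = (1 : k))
    (hεx : Coalgebra.counit (R := k) x = (0 : k))
    (ρ : H →ₐ[k] Module.End k A)
    (hma : ∀ (h : H) (a b : A), ρ h (a * b) = evHat ρ (Coalgebra.comul (R := k) h) a b)
    (hone : ∀ h : H, ρ h (1 : A) = Coalgebra.counit (R := k) h • (1 : A))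
    (Ψ : A → A → A) (hΨ : ∀ a b, Ψ a b = ρ (x * g) a * ρ x b) :
    ∀ a b c : A, a * Ψ b c - Ψ (a * b) c + Ψ a (b * c) - Ψ a b * c = 0 :=
  stmt8_general g x hg2 hΔg hΔx ρ hma Ψ hΨ
end

section
/- Let A be an associative algebra and d₁, …, dₙ : A → A linear maps such that for each i there exist algebra endomorphisms gᵢ, hᵢ of A with dᵢ(ab) = gᵢ(a) dᵢ(b) + dᵢ(a) hᵢ(b) for all a, b ∈ A. Assume g₁ = id, hₙ = id, and hᵢ = gᵢ₊₁ for all i = 1, …, n−1. Then f : A^⊗n → A defined by f(a₁, …, aₙ) = d₁(a₁) ⋯ dₙ(aₙ) is a Hochschild n-cocycle: (∂f)(a₀, …, aₙ) := a₀ f(a₁,…,aₙ) + Σᵢ₌₁ⁿ (−1)ⁱ f(a₀,…,aᵢ₋₁aᵢ,…,aₙ) + (−1)ⁿ⁺¹ f(a₀,…,aₙ₋₁) aₙ = 0. -/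
variable {k A : Type*} [CommRing k] [Ring A] [Algebra k A]

/-- `f(a₁,…,aₙ) = d₁(a₁) ⋯ dₙ(aₙ)` (ordered product). -/
noncomputable def fprod {n : ℕ} (d : Fin n → (A →ₗ[k] A)) (a : Fin n → A) : A :=
  (List.ofFn fun i => d i (a i)).prod

/-- The `i`-th face: merge the entries at positions `i−1` and `i` (`1 ≤ i ≤ n`) of
`(a₀, …, aₙ)`, producing an `n`-tuple. -/
noncomputable def merge {n : ℕ} (a : Fin (n + 1) → A) (i : ℕ) : Fin n → A :=
  fun j => if (j : ℕ) + 1 < i then a j.castSucc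
    else if (j : ℕ) + 1 = i then a j.castSucc * a j.succ
    else a j.succ

/-! If `φ₀, …, φₙ` are maps with each `dᵢ` a `(φᵢ₋₁, φᵢ)`-skew derivation, then the twisted
coboundary `φ₀(a₀) f(a₁,…,aₙ) + Σ (−1)ⁱ f(…, aᵢ₋₁aᵢ, …) + (−1)ⁿ⁺¹ f(a₀,…,aₙ₋₁) φₙ(aₙ)` vanishes.
By induction on `n`: expanding `d₁(a₀a₁)` in the first face cancels the first term, and what
remains is `−d₁(a₀)` times the twisted coboundary of `(d₂, …, dₙ)` at `(a₁, …, aₙ)`.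
The theorem is the case `φ = (g₁, …, gₙ, id)`, where `g₁ = id`. -/

open Finset

lemma sum_Icc_one_succ {M : Type*} [AddCommMonoid M] (f : ℕ → M) (n : ℕ) :
    ∑ i ∈ Icc 1 (n + 1), f i = f 1 + ∑ i ∈ Icc 1 n, f (i + 1) := by
  induction n with
  | zero => simp
  | succ n ih => rw [sum_Icc_succ_top (by omega), ih, sum_Icc_succ_top (by omega), add_assoc]

lemma fprod_succ {n : ℕ} (d : Fin (n + 1) → (A →ₗ[k] A)) (a : Fin (n + 1) → A) :
    fprod d a = d 0 (a 0) * fprod (fun i => d i.succ) (fun i => a i.succ) := by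
  simp [fprod, List.ofFn_succ]

lemma merge_one {n : ℕ} (a : Fin (n + 2) → A) :
    merge a 1 = Fin.cons (a 0 * a 1) (fun j => a j.succ.succ) := by
  funext j
  cases j using Fin.cases <;> simp [merge]

lemma merge_succ {n : ℕ} (a : Fin (n + 2) → A) {i : ℕ} (hi : 1 ≤ i) :
    merge a (i + 1) = Fin.cons (a 0) (merge (fun j => a j.succ) i) := by
  funext j
  cases j using Fin.cases with
  | zero => simp [merge, show 1 < i + 1 by omega]
  | succ j => simp [merge]

theorem fprod_twisted_coboundary_eq_zero {n : ℕ} (d : Fin n → (A →ₗ[k] A))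
    (φ : Fin (n + 1) → A → A)
    (hskew : ∀ (i : Fin n) (a b : A), d i (a * b) = φ i.castSucc a * d i b + d i a * φ i.succ b)
    (a : Fin (n + 1) → A) :
    φ 0 (a 0) * fprod d (fun j => a j.succ)
      + (∑ i ∈ Icc 1 n, ((-1 : ℤ) ^ i) • fprod d (merge a i))
      + ((-1 : ℤ) ^ (n + 1)) • (fprod d (fun j => a j.castSucc) * φ (Fin.last n) (a (Fin.last n)))
      = 0 := by
  induction n with
  | zero => simp [fprod]
  | succ n ih =>
    set d' : Fin n → (A →ₗ[k] A) := fun i => d i.succ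
    have ih' := ih d' (fun i => φ i.succ) (fun i x y => hskew i.succ x y)
      (fun j => a j.succ)
    simp only [Fin.succ_zero_eq_one, Fin.succ_last] at ih'
    set S := ∑ i ∈ Icc 1 n, ((-1 : ℤ) ^ i) • fprod d' (merge (fun j => a j.succ) i)
    set L := fprod d' (fun j => a j.castSucc.succ) * φ (Fin.last (n + 1)) (a (Fin.last (n + 1)))
    have hface : ∑ i ∈ Icc 1 n, ((-1 : ℤ) ^ (i + 1)) • fprod d (merge a (i + 1))
        = -(d 0 (a 0) * S) := by
      rw [Finset.mul_sum, ← Finset.sum_neg_distrib]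
      refine Finset.sum_congr rfl fun i hi => ?_
      rw [merge_succ a (Finset.mem_Icc.1 hi).1, fprod_succ, pow_succ, mul_neg_one, neg_smul,
        mul_smul_comm]
      rfl
    have hlast : fprod d (fun j => a j.castSucc) * φ (Fin.last (n + 1)) (a (Fin.last (n + 1)))
        = d 0 (a 0) * L := by
      rw [fprod_succ, mul_assoc]
      rfl
    rw [sum_Icc_one_succ, hface, hlast, fprod_succ, merge_one, fprod_succ]
    calc _ = -(d 0 (a 0) * (φ 1 (a 1) * fprod d' (fun j => a j.succ.succ) + S
          + (-1 : ℤ) ^ (n + 1) • L)) := by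
          simp only [Fin.cons_zero, Fin.cons_succ, hskew, Fin.castSucc_zero, Fin.succ_zero_eq_one,
            pow_succ (-1 : ℤ) (n + 1), mul_neg_one, neg_smul, pow_one]
          noncomm_ring
      _ = 0 := by rw [ih', mul_zero, neg_zero]

/-- if each `dᵢ` is a `(gᵢ, hᵢ)`-skew derivation with `g₁ = id`, `hₙ = id`
and `hᵢ = gᵢ₊₁`, then `f(a₁,…,aₙ) = d₁(a₁)⋯dₙ(aₙ)` is a Hochschild `n`-cocycle. -/
theorem stmt9 {n : ℕ} (d : Fin n → (A →ₗ[k] A)) (g h : Fin n → (A →ₐ[k] A))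
    (hskew : ∀ (i : Fin n) (a b : A), d i (a * b) = g i a * d i b + d i a * h i b)
    (hfirst : ∀ i : Fin n, (i : ℕ) = 0 → g i = AlgHom.id k A)
    (hlast : ∀ i : Fin n, (i : ℕ) = n - 1 → h i = AlgHom.id k A)
    (hchain : ∀ i j : Fin n, (j : ℕ) = (i : ℕ) + 1 → h i = g j) :
    ∀ a : Fin (n + 1) → A,
      a 0 * fprod d (fun j => a j.succ)
        + (∑ i ∈ Finset.Icc 1 n, ((-1 : ℤ) ^ i) • fprod d (merge a i))
        + ((-1 : ℤ) ^ (n + 1)) • (fprod d (fun j => a j.castSucc) * a (Fin.last n)) = 0 := by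
  intro a
  let φ : Fin (n + 1) → A → A := Fin.lastCases id fun i => g i
  have hφ_castSucc (i : Fin n) : φ i.castSucc = g i := Fin.lastCases_castSucc ..
  have hφ_last : φ (Fin.last n) = id := Fin.lastCases_last ..
  have hφ_succ (i : Fin n) : φ i.succ = h i := by
    rcases Fin.eq_castSucc_or_eq_last i.succ with ⟨j, hj⟩ | hj
    · rw [hj, hφ_castSucc, hchain i j (by simpa using congrArg Fin.val hj.symm)]
    · rw [hj, hφ_last, hlast i (by rw [Fin.ext_iff, Fin.val_succ, Fin.val_last] at hj; omega),
        AlgHom.coe_id]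
  have hφ_zero : φ 0 = id := by
    rcases Fin.eq_castSucc_or_eq_last (0 : Fin (n + 1)) with ⟨i, hi⟩ | hi
    · rw [hi, hφ_castSucc, hfirst i (by simpa using congrArg Fin.val hi.symm),
        AlgHom.coe_id]
    · rw [hi, hφ_last]
  simpa only [hφ_zero, hφ_last, id] using fprod_twisted_coboundary_eq_zero d φ
    (fun i x y => by rw [hskew, hφ_castSucc, hφ_succ]) a
end

section
/- Let H be a bialgebra and g₀, g₁, …, gₙ group-like elements of H with g₀ = gₙ = 1_H. Suppose x₁, …, xₙ ∈ H with each xᵢ a (gᵢ₋₁, gᵢ)-primitive: Δxᵢ = gᵢ₋₁ ⊗ xᵢ + xᵢ ⊗ gᵢ. Then ω = x₁ ⊗ ⋯ ⊗ xₙ ∈ V^⊗n (V = Ker ε) is a cycle for the cobar differential: Σᵢ₌₁ⁿ (−1)^{i+1} x₁ ⊗ ⋯ ⊗ Δ'(xᵢ) ⊗ ⋯ ⊗ xₙ = 0, where Δ'(xᵢ) = u_{gᵢ₋₁} ⊗ xᵢ + xᵢ ⊗ u_{gᵢ} and u_g = g − 1_H. (The sum telescopes, and u_{g₀} = u_{gₙ}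 = 0.) -/
open TensorProduct

universe u

variable (k H : Type u) [Field k] [Ring H] [Bialgebra k H]

/-- The iterated tensor powers `H^{⊗n}` (padded by `k` on the right), as modules. -/
noncomputable def Tb : ℕ → ModuleCat.{u} k
  | 0 => ModuleCat.of k k
  | n + 1 => ModuleCat.of k (H ⊗[k] (Tb n))

/-- The cobar differential extending `Δ'` with Koszul signs, recursively
`d = (Δ' ⊗ id) − (id ⊗ d)`; this is `Σᵢ (−1)^{i+1} (apply Δ' in the i-th slot)`. -/
noncomputable def dcobar (Δ' : H →ₗ[k] H ⊗[k] H) :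
    ∀ n, (Tb k H n : Type u) →ₗ[k] (Tb k H (n + 1) : Type u)
  | 0 => 0
  | n + 1 =>
      ((TensorProduct.assoc k H H (Tb k H n)).toLinearMap
        ∘ₗ TensorProduct.map Δ' LinearMap.id)
      - TensorProduct.map LinearMap.id (dcobar Δ' n)

/-- The reduced comultiplication `Δ'(v) = Δ(v) − 1 ⊗ v − v ⊗ 1`. -/
noncomputable def ΔredH : H →ₗ[k] H ⊗[k] H :=
  Coalgebra.comul - TensorProduct.mk k H H 1 - (TensorProduct.mk k H H).flip 1

/-- The pure tensor `x₁ ⊗ ⋯ ⊗ xₙ` in `H^{⊗n}` (padded). -/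
noncomputable def elt : ∀ n, (Fin n → H) → (Tb k H n : Type u)
  | 0, _ => (1 : k)
  | n + 1, x => x 0 ⊗ₜ[k] elt n (fun i => x i.succ)

/-! Write `u_g = g - 1`, so that a `(g, h)`-primitive `x` has `Δ'(x) = u_g ⊗ x + x ⊗ u_h`.
Peeling off the first factor, `d(x₁ ⊗ ω') = Δ'(x₁) ⊗ ω' - x₁ ⊗ dω'`. By induction on the length,
a chain ending at `gₙ = 1` has `dω' = u_{g₁} ⊗ ω'`, which cancels the term `x₁ ⊗ u_{g₁} ⊗ ω'`
of `Δ'(x₁) ⊗ ω'`; hence `dω = u_{g₀} ⊗ ω`, which vanishes when `g₀ = 1`. -/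

lemma ΔredH_apply_of_comul_eq {a b x : H}
    (h : Coalgebra.comul (R := k) x = a ⊗ₜ[k] x + x ⊗ₜ[k] b) :
    ΔredH k H x = (a - 1) ⊗ₜ[k] x + x ⊗ₜ[k] (b - 1) := by
  simp only [ΔredH, LinearMap.sub_apply, h, TensorProduct.mk_apply, LinearMap.flip_apply,
    TensorProduct.sub_tmul, TensorProduct.tmul_sub]
  abel

lemma dcobar_succ_tmul (Δ' : H →ₗ[k] H ⊗[k] H) (n : ℕ) (a : H) (t : (Tb k H n : Type u)) :
    dcobar k H Δ' (n + 1) (a ⊗ₜ[k] t)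
      = TensorProduct.assoc k H H _ (Δ' a ⊗ₜ[k] t)
        - TensorProduct.tmul k (N := H ⊗[k] (Tb k H n : Type u)) a (dcobar k H Δ' n t) :=
  rfl

lemma dcobar_elt_of_last_eq_one (n : ℕ) (g : Fin (n + 1) → H) (x : Fin n → H)
    (hx : ∀ i : Fin n, Coalgebra.comul (R := k) (x i)
      = g i.castSucc ⊗ₜ[k] x i + x i ⊗ₜ[k] g i.succ)
    (hgn : g (Fin.last n) = 1) :
    dcobar k H (ΔredH k H) n (elt k H n x)
      = ((g 0 - 1) ⊗ₜ[k] elt k H n x : H ⊗[k] (Tb k H n : Type u)) := by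
  induction n with
  | zero =>
    change (0 : (Tb k H 1 : Type u)) = (g 0 - 1) ⊗ₜ[k] elt k H 0 x
    rw [show g 0 = 1 from hgn, sub_self, TensorProduct.zero_tmul]
    rfl
  | succ n ih =>
    have h_tail := ih (fun i => g i.succ) (fun i => x i.succ) (fun i => hx i.succ)
      (by simpa [Fin.succ_last] using hgn)
    rw [elt, dcobar_succ_tmul, h_tail, ΔredH_apply_of_comul_eq k H (hx 0)]
    simp only [TensorProduct.add_tmul, map_add, TensorProduct.assoc_tmul]
    rw [add_sub_cancel_right]
    rfl

theorem stmt16 (n : ℕ) (g : Fin (n + 1) → H) (x : Fin n → H)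
    (hg0 : g 0 = 1) (hgn : g (Fin.last n) = 1)
    (hx : ∀ i : Fin n, Coalgebra.comul (R := k) (x i)
      = g i.castSucc ⊗ₜ[k] x i + x i ⊗ₜ[k] g i.succ) :
    dcobar k H (ΔredH k H) n (elt k H n x) = 0 := by
  have h := dcobar_elt_of_last_eq_one k H n g x hx hgn
  rwa [hg0, sub_self, TensorProduct.zero_tmul] at h
end

section
/- Let A be a unital associative algebra with an action of the Sweedler algebra, and let Ψ ∈ Hom(A^⊗ 2, A) be the Hochschild 2-cochain Ψ(a,b) = (xg)(a)x(b). Then Ψ has vanishing Gerstenhaber self-bracket, [Ψ, Ψ] = 0; that is, [Ψ,Ψ](a,b,c) = 2(Ψ(Ψ(a,b),c) − Ψ(a,Ψ(b,c))) = 0 for all a,b,c ∈ A. -/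
/-- for an algebra `A` which is a module algebra over the Sweedler
4-dimensional Hopf algebra — given by operators `G` (automorphism of order 2) and `X`
(square-zero skew derivation, `X(ab) = X(a)b + G(a)X(b)`, `X∘G = −G∘X`) — the 2-cochain
`Ψ(a,b) = X(G(a))·X(b)` has vanishing Gerstenhaber self-bracket:
`[Ψ,Ψ](a,b,c) = 2(Ψ(Ψ(a,b),c) − Ψ(a,Ψ(b,c))) = 0`. -/
theorem stmt19 {k A : Type*} [Field k] [Ring A] [Algebra k A]
    (hchar : (2 : k) ≠ 0)
    (G : A ≃ₐ[k] A) (X : A →ₗ[k] A)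
    (hG2 : ∀ a : A, G (G a) = a)
    (hX2 : ∀ a : A, X (X a) = 0)
    (hskew : ∀ a b : A, X (a * b) = X a * b + G a * X b)
    (hXG : ∀ a : A, X (G a) = - G (X a))
    (Ψ : A → A → A) (hΨ : ∀ a b, Ψ a b = X (G a) * X b) :
    ∀ a b c : A, (2 : ℤ) • (Ψ (Ψ a b) c - Ψ a (Ψ b c)) = 0 := by
  have hGX : ∀ a : A, G (X a) = - X (G a) := fun a => by rw [hXG a, neg_neg]
  intro a b c
  have h1 : Ψ (Ψ a b) c = 0 := by
    rw [hΨ, hΨ, map_mul, hGX (G a), hG2, hGX b,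
      neg_mul_neg, hskew, hX2, hX2, zero_mul, mul_zero, add_zero, zero_mul]
  have h2 : Ψ a (Ψ b c) = 0 := by
    rw [hΨ, hΨ, hskew, hX2, hX2, zero_mul, mul_zero, add_zero, mul_zero]
  rw [h1, h2, sub_zero, smul_zero]
end
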